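/- arXiv:1411.7854 — 3 statements merged into one kernel-verified Lean document; each statement's English description precedes it below -/
import Mathlib

section
/- Let μ_Y be an F-invariant probability measure on Y, p ≥ 1, r ∈ L^p(Y,μ_Y), and suppose v : M → ℝ^d is η-Hölder with constant |v|_η. Assume the stable contraction property: d_M(f^ℓ(F^j(y)), f^ℓ(F^j(y'))) ≤ C γ₀^j for all y' ~ y, all j ≥ 0 and all 0 ≤ ℓ < r(F^j(y)). Then for every y ∈ Y and j ≥ 0, |V(F^j(h(y))) − V(F^j(y))| ≤ |v|_η C^η γ^j r(F^j(y)) where γ = γ₀^η, and consequently χ₁(y) = Σ_{j=0}^∞ (V(F^j(h(y))) − V(F^j(y))) defines a function χ₁ ∈ L^p(Y,μ_Y;ℝ^d) with ‖χ₁‖_{L^p} ≤ |v|_η C^η (1−γ)^{-1} ‖r‖_{L^p}. -/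
open Function MeasureTheory Filter Topology ENNReal

/-- the pointwise bound `|V(F^j h(y)) − V(F^j y)| ≤ |v|_η C^η γ^j r(F^j y)`
and the resulting `L^p` bound on `χ₁`. -/
theorem chi1_Lp
    {d : ℕ} {M : Type*} [MetricSpace M] [MeasurableSpace M] (f : M → M) (Y : Set M)
    (r : Y → ℕ) (hr_pos : ∀ y, 0 < r y)
    (F : Y → Y) (hF : ∀ y : Y, (F y : M) = f^[r y] (y : M))
    (sim : Y → Y → Prop) (hsim : Equivalence sim)
    (hr_sim : ∀ y y', sim y y' → r y = r y')
    (hF_sim : ∀ y y', sim y y' → sim (F y) (F y'))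
    (h : Y → Y) (hh : ∀ y, sim (h y) y) (hh' : ∀ y y', sim y y' → h y = h y')
    (μ : Measure Y) [IsProbabilityMeasure μ]
    (hFinv : MeasurePreserving F μ μ)
    (p : ℝ≥0∞) (hp : 1 ≤ p) (hp' : p ≠ ∞)
    (hrLp : MemLp (fun y => (r y : ℝ)) p μ)
    (C γ₀ η Cv : ℝ) (hC : 1 ≤ C) (hγ₀ : γ₀ ∈ Set.Ioo (0:ℝ) 1)
    (hη : η ∈ Set.Ioc (0:ℝ) 1) (hCv : 0 ≤ Cv)
    (v : M → EuclideanSpace ℝ (Fin d))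
    (hHolder : ∀ x x' : M, ‖v x - v x'‖ ≤ Cv * dist x x' ^ η)
    -- (A2)(i): contraction along stable leaves
    (hcontract : ∀ y y' : Y, sim y y' → ∀ j : ℕ, ∀ ℓ ≤ r (F^[j] y),
      dist (f^[ℓ] ((F^[j] y : Y) : M)) (f^[ℓ] ((F^[j] y' : Y) : M)) ≤ C * γ₀ ^ j)
    (V : Y → EuclideanSpace ℝ (Fin d))
    (hV : ∀ y : Y, V y = ∑ ℓ ∈ Finset.range (r y), v (f^[ℓ] (y : M)))
    (hmeas : ∀ j : ℕ, AEStronglyMeasurable (fun y => V (F^[j] (h y)) - V (F^[j] y)) μ) :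
    (∀ y (j : ℕ), ‖V (F^[j] (h y)) - V (F^[j] y)‖
        ≤ Cv * C ^ η * (γ₀ ^ η) ^ j * (r (F^[j] y) : ℝ)) ∧
    (∃ χ₁ : Y → EuclideanSpace ℝ (Fin d), MemLp χ₁ p μ ∧
      (∀ᵐ y ∂μ, HasSum (fun j : ℕ => V (F^[j] (h y)) - V (F^[j] y)) (χ₁ y)) ∧
      eLpNorm χ₁ p μ ≤ ENNReal.ofReal (Cv * C ^ η * (1 - γ₀ ^ η)⁻¹)
          * eLpNorm (fun y => (r y : ℝ)) p μ) := by
  obtain ⟨hγ₀0, hγ₀1⟩ := hγ₀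
  obtain ⟨hη0, hη1⟩ := hη
  set γ : ℝ := γ₀ ^ η with hγdef
  have hγ0 : 0 < γ := Real.rpow_pos_of_pos hγ₀0 η
  have hγ1 : γ < 1 := Real.rpow_lt_one hγ₀0.le hγ₀1 hη0
  have hC0 : (0:ℝ) < C := lt_of_lt_of_le one_pos hC
  set K : ℝ := Cv * C ^ η with hKdef
  have hK0 : 0 ≤ K := mul_nonneg hCv (Real.rpow_nonneg hC0.le η)
  -- the iterated points stay on the same stable leaf
  have hsimiter : ∀ (y : Y) (j : ℕ), sim (F^[j] (h y)) (F^[j] y) := by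
    intro y j
    induction j with
    | zero => exact hh y
    | succ n ih =>
      rw [Function.iterate_succ_apply', Function.iterate_succ_apply']
      exact hF_sim _ _ ih
  -- Part 1 : pointwise bound
  have part1 : ∀ y (j : ℕ), ‖V (F^[j] (h y)) - V (F^[j] y)‖
      ≤ Cv * C ^ η * (γ₀ ^ η) ^ j * (r (F^[j] y) : ℝ) := by
    intro y j
    have hrr : r (F^[j] (h y)) = r (F^[j] y) := hr_sim _ _ (hsimiter y j)
    rw [hV, hV, hrr, ← Finset.sum_sub_distrib]
    refine le_trans (norm_sum_le _ _) ?_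
    have hterm : ∀ ℓ ∈ Finset.range (r (F^[j] y)),
        ‖v (f^[ℓ] ((F^[j] (h y) : Y) : M)) - v (f^[ℓ] ((F^[j] y : Y) : M))‖
          ≤ Cv * C ^ η * γ ^ j := by
      intro ℓ hℓ
      have hℓ' : ℓ ≤ r (F^[j] (h y)) := by
        rw [hrr]; exact (Finset.mem_range.mp hℓ).le
      have hd := hcontract (h y) y (hh y) j ℓ hℓ'
      have h1 : ‖v (f^[ℓ] ((F^[j] (h y) : Y) : M)) - v (f^[ℓ] ((F^[j] y : Y) : M))‖
          ≤ Cv * dist (f^[ℓ] ((F^[j] (h y) : Y) : M)) (f^[ℓ] ((F^[j] y : Y) : M)) ^ η :=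
        hHolder _ _
      have h2 : dist (f^[ℓ] ((F^[j] (h y) : Y) : M)) (f^[ℓ] ((F^[j] y : Y) : M)) ^ η
          ≤ (C * γ₀ ^ j) ^ η :=
        Real.rpow_le_rpow dist_nonneg hd hη0.le
      have h3 : (C * γ₀ ^ j) ^ η = C ^ η * γ ^ j := by
        rw [Real.mul_rpow hC0.le (pow_nonneg hγ₀0.le j), ← Real.rpow_natCast γ₀ j,
          ← Real.rpow_mul hγ₀0.le, mul_comm (j:ℝ) η, Real.rpow_mul hγ₀0.le,
          Real.rpow_natCast]
      calc ‖v (f^[ℓ] ((F^[j] (h y) : Y) : M)) - v (f^[ℓ] ((F^[j] y : Y) : M))‖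
          ≤ Cv * (C * γ₀ ^ j) ^ η := h1.trans (by
            exact mul_le_mul_of_nonneg_left h2 hCv)
        _ = Cv * C ^ η * γ ^ j := by rw [h3]; ring
    refine le_trans (Finset.sum_le_sum hterm) ?_
    rw [Finset.sum_const, Finset.card_range, nsmul_eq_mul]
    exact le_of_eq (by ring)
  refine ⟨part1, ?_⟩
  -- Part 2
  set g : ℕ → Y → EuclideanSpace ℝ (Fin d) :=
    fun j y => V (F^[j] (h y)) - V (F^[j] y) with hgdef
  have hgbound : ∀ j y, ‖g j y‖ ≤ K * γ ^ j * (r (F^[j] y) : ℝ) := fun j y => part1 y j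
  set χ₁ : Y → EuclideanSpace ℝ (Fin d) := fun y => ∑' j, g j y with hχdef
  -- measurability of r ∘ F^[j]
  have hrm : AEMeasurable (fun y => (r y : ℝ)) μ := hrLp.aestronglyMeasurable.aemeasurable
  have hrmj : ∀ j : ℕ, AEMeasurable (fun y => (r (F^[j] y) : ℝ)) μ := fun j =>
    hrm.comp_quasiMeasurePreserving (hFinv.iterate j).quasiMeasurePreserving
  -- L¹ bound on r
  have hr1 : Integrable (fun y => (r y : ℝ)) μ :=
    memLp_one_iff_integrable.mp (hrLp.mono_exponent hp)
  have hIr : ∫⁻ y, ENNReal.ofReal ((r y : ℝ)) ∂μ < ⊤ := by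
    have := hr1.2
    rw [hasFiniteIntegral_iff_norm] at this
    simpa using this
  -- a.e. summability
  have hsummable : ∀ᵐ y ∂μ, Summable (fun j : ℕ => γ ^ j * (r (F^[j] y) : ℝ)) := by
    set u : ℕ → Y → ℝ≥0∞ := fun j y => ENNReal.ofReal (γ ^ j * (r (F^[j] y) : ℝ)) with hudef
    have hum : ∀ j, AEMeasurable (u j) μ := fun j =>
      ENNReal.measurable_ofReal.comp_aemeasurable ((hrmj j).const_mul _)
    have hfin : ∫⁻ y, ∑' j, u j y ∂μ ≠ ⊤ := by
      rw [lintegral_tsum hum]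
      have heq : ∀ j : ℕ, ∫⁻ y, u j y ∂μ
          = ENNReal.ofReal (γ ^ j) * ∫⁻ y, ENNReal.ofReal ((r y : ℝ)) ∂μ := by
        intro j
        have h1 : ∀ y, u j y = ENNReal.ofReal (γ ^ j) * ENNReal.ofReal ((r (F^[j] y) : ℝ)) := by
          intro y; simp only [hudef]; rw [ENNReal.ofReal_mul (pow_nonneg hγ0.le j)]
        simp_rw [h1]
        rw [lintegral_const_mul' _ _ ENNReal.ofReal_ne_top]
        congr 1
        have hmap := (hFinv.iterate j).map_eq
        calc ∫⁻ y, ENNReal.ofReal ((r (F^[j] y) : ℝ)) ∂μ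
            = ∫⁻ y, ENNReal.ofReal ((r y : ℝ)) ∂(Measure.map (F^[j]) μ) := by
              rw [lintegral_map' (by rw [hmap]; exact ENNReal.measurable_ofReal.comp_aemeasurable hrm)
                (hFinv.iterate j).aemeasurable]
          _ = ∫⁻ y, ENNReal.ofReal ((r y : ℝ)) ∂μ := by rw [hmap]
      simp_rw [heq]
      rw [ENNReal.tsum_mul_right]
      refine ENNReal.mul_ne_top ?_ hIr.ne
      have : ∀ j : ℕ, ENNReal.ofReal (γ ^ j) = (ENNReal.ofReal γ) ^ j := fun j =>
        ENNReal.ofReal_pow hγ0.le j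
      simp_rw [this]
      rw [ENNReal.tsum_geometric]
      exact ENNReal.inv_ne_top.mpr (by
        simp only [ne_eq, tsub_eq_zero_iff_le, not_le]
        exact ENNReal.ofReal_lt_one.mpr hγ1)
    have hae := ae_lt_top' (AEMeasurable.ennreal_tsum hum) hfin
    filter_upwards [hae] with y hy
    have hs : Summable (fun j : ℕ => (u j y).toReal) :=
      ENNReal.summable_toReal hy.ne
    refine hs.congr fun j => ?_
    simp only [hudef]
    exact ENNReal.toReal_ofReal (mul_nonneg (pow_nonneg hγ0.le j) (Nat.cast_nonneg _))
  have hAEhs : ∀ᵐ y ∂μ, HasSum (fun j : ℕ => g j y) (χ₁ y) := by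
    filter_upwards [hsummable] with y hy
    have hsn : Summable (fun j : ℕ => ‖g j y‖) := by
      refine Summable.of_nonneg_of_le (fun j => norm_nonneg _) (fun j => ?_)
        (hy.mul_left K)
      calc ‖g j y‖ ≤ K * γ ^ j * (r (F^[j] y) : ℝ) := hgbound j y
        _ = K * (γ ^ j * (r (F^[j] y) : ℝ)) := by ring
    exact (hsn.of_norm).hasSum
  -- partial sums
  set S : ℕ → Y → EuclideanSpace ℝ (Fin d) := fun n y => ∑ j ∈ Finset.range n, g j y
    with hSdef
  have hSm : ∀ n, AEStronglyMeasurable (S n) μ := fun n =>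
    Finset.aestronglyMeasurable_fun_sum _ (fun j _ => hmeas j)
  have hStend : ∀ᵐ y ∂μ, Tendsto (fun n => S n y) atTop (𝓝 (χ₁ y)) := by
    filter_upwards [hAEhs] with y hy
    exact hy.tendsto_sum_nat
  have hχm : AEStronglyMeasurable χ₁ μ :=
    aestronglyMeasurable_of_tendsto_ae atTop hSm hStend
  -- eLpNorm bound for partial sums
  have hrN : eLpNorm (fun y => (r y : ℝ)) p μ ≠ ⊤ := hrLp.2.ne
  have hSbound : ∀ n, eLpNorm (S n) p μ
      ≤ ENNReal.ofReal (K * (1 - γ)⁻¹) * eLpNorm (fun y => (r y : ℝ)) p μ := by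
    intro n
    have h1 : eLpNorm (S n) p μ ≤ ∑ j ∈ Finset.range n, eLpNorm (g j) p μ := by
      have h0 := eLpNorm_sum_le (f := g) (s := Finset.range n) (fun j _ => hmeas j) hp
      have hSe : S n = ∑ j ∈ Finset.range n, g j := by
        funext y; simp [hSdef]
      rw [hSe]; exact h0
    have h2 : ∀ j : ℕ, eLpNorm (g j) p μ
        ≤ ENNReal.ofReal (K * γ ^ j) * eLpNorm (fun y => (r y : ℝ)) p μ := by
      intro j
      have hb : eLpNorm (g j) p μ
          ≤ eLpNorm ((K * γ ^ j) • fun y => (r (F^[j] y) : ℝ)) p μ := by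
        refine eLpNorm_mono fun y => ?_
        simp only [Pi.smul_apply, smul_eq_mul]
        rw [Real.norm_eq_abs, abs_of_nonneg
          (mul_nonneg (mul_nonneg hK0 (pow_nonneg hγ0.le j)) (Nat.cast_nonneg _))]
        exact hgbound j y
      have heq : eLpNorm ((K * γ ^ j) • fun y => ((r (F^[j] y) : ℝ))) p μ
          = ENNReal.ofReal (K * γ ^ j) * eLpNorm (fun y => (r (F^[j] y) : ℝ)) p μ := by
        rw [eLpNorm_const_smul (K * γ ^ j) (fun y => ((r (F^[j] y) : ℝ)))]
        congr 1
        rw [← ofReal_norm, Real.norm_eq_abs, abs_of_nonneg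
          (mul_nonneg hK0 (pow_nonneg hγ0.le j))]
      have heq2 : eLpNorm (fun y => (r (F^[j] y) : ℝ)) p μ
          = eLpNorm (fun y => (r y : ℝ)) p μ :=
        eLpNorm_comp_measurePreserving (g := fun y : Y => (r y : ℝ)) hrLp.aestronglyMeasurable (hFinv.iterate j)
      calc eLpNorm (g j) p μ ≤ _ := hb
        _ = ENNReal.ofReal (K * γ ^ j) * eLpNorm (fun y => (r (F^[j] y) : ℝ)) p μ := heq
        _ = ENNReal.ofReal (K * γ ^ j) * eLpNorm (fun y => (r y : ℝ)) p μ := by rw [heq2]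
    calc eLpNorm (S n) p μ ≤ ∑ j ∈ Finset.range n, eLpNorm (g j) p μ := h1
      _ ≤ ∑ j ∈ Finset.range n, ENNReal.ofReal (K * γ ^ j)
            * eLpNorm (fun y => (r y : ℝ)) p μ := Finset.sum_le_sum fun j _ => h2 j
      _ = (∑ j ∈ Finset.range n, ENNReal.ofReal (K * γ ^ j))
            * eLpNorm (fun y => (r y : ℝ)) p μ := by rw [Finset.sum_mul]
      _ ≤ ENNReal.ofReal (K * (1 - γ)⁻¹) * eLpNorm (fun y => (r y : ℝ)) p μ := by
          refine mul_le_mul_left ?_ _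
          rw [← ENNReal.ofReal_sum_of_nonneg
            (fun j _ => mul_nonneg hK0 (pow_nonneg hγ0.le j))]
          refine ENNReal.ofReal_le_ofReal ?_
          rw [← Finset.mul_sum]
          refine mul_le_mul_of_nonneg_left ?_ hK0
          calc ∑ j ∈ Finset.range n, γ ^ j
              ≤ ∑' j : ℕ, γ ^ j := Summable.sum_le_tsum _ (fun j _ => pow_nonneg hγ0.le j)
                (summable_geometric_of_lt_one hγ0.le hγ1)
            _ = (1 - γ)⁻¹ := tsum_geometric_of_lt_one hγ0.le hγ1
  have hχbound : eLpNorm χ₁ p μ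
      ≤ ENNReal.ofReal (K * (1 - γ)⁻¹) * eLpNorm (fun y => (r y : ℝ)) p μ := by
    refine le_trans (Lp.eLpNorm_lim_le_liminf_eLpNorm hSm χ₁ hStend) ?_
    refine liminf_le_of_frequently_le' (Frequently.of_forall fun n => hSbound n)
  refine ⟨χ₁, ⟨hχm, lt_of_le_of_lt hχbound ?_⟩, hAEhs, hχbound⟩
  exact ENNReal.mul_lt_top ENNReal.ofReal_lt_top hrLp.2
end

section
/- Let (Ȳ, μ̄) be a probability space, A a countable index set, and for each a ∈ A let m_a ≥ 0, ρ_a ≥ 0, a branch map β_a : Ȳ → Ȳ, and a weight g_a : Ȳ → [0,∞) be given. Let D : Ȳ × Ȳ → [0,1] be symmetric and fix γ ∈ (0,1), j ≥ 0, K ≥ 0, C₁ ≥ 1. Assume: (i) g_a(β_a(y)) ≤ C₁ m_a for all a, y; (ii) |g_a(β_a(y)) − g_a(β_a(y'))| ≤ C₁ m_a D(y,y') for all a and y,y' ∈ Ȳ; (iii) R := Σ_a m_a ρ_a < ∞. Let W : Ȳ → ℝ^d satisfy |W(β_a(y))| ≤ K ρ_a γ^j and |W(β_a(y)) − W(β_a(y'))|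 ≤ K ρ_a D(y,y')² for all a and y,y' ∈ Ȳ. Then (PW)(y) := Σ_a g_a(β_a(y)) W(β_a(y)) satisfies |(PW)(y) − (PW)(y')| ≤ 3 C₁ K R γ^{j/2} D(y,y') for all y,y' ∈ Ȳ, and combined with the sup-norm bound, ‖PW‖ := |PW|_∞ + sup_{y≠y'} |(PW)(y) − (PW)(y')|/D(y,y') ≤ 4 C₁ K R γ^{j/2}. -/
open Function MeasureTheory

/-- the Lipschitz half of the key transfer-operator estimate
(Proposition 3.2 of the paper, in abstract form), together with the combined
norm bound `‖PW‖ = |PW|_∞ + Lip(PW) ≤ 4 C₁ K R γ^{j/2}`. -/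
theorem transfer_lipschitz_bound
    {d : ℕ} {Ybar : Type*} [MeasurableSpace Ybar] (μ : Measure Ybar)
    [IsProbabilityMeasure μ]
    {A : Type*} [Countable A]
    (m ρ : A → ℝ) (hm : ∀ a, 0 ≤ m a) (hρ : ∀ a, 0 ≤ ρ a)
    (β : A → Ybar → Ybar) (g : A → Ybar → ℝ) (hg : ∀ a y, 0 ≤ g a y)
    (D : Ybar → Ybar → ℝ)
    (hDsymm : ∀ y y', D y y' = D y' y)
    (hD01 : ∀ y y', D y y' ∈ Set.Icc (0:ℝ) 1)
    (γ : ℝ) (hγ : γ ∈ Set.Ioo (0:ℝ) 1) (j : ℕ) (K : ℝ) (hK : 0 ≤ K)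
    (C₁ : ℝ) (hC₁ : 1 ≤ C₁)
    (hgb : ∀ a y, g a (β a y) ≤ C₁ * m a)
    (hgLip : ∀ a y y', |g a (β a y) - g a (β a y')| ≤ C₁ * m a * D y y')
    (hR : Summable fun a => m a * ρ a)
    (W : Ybar → EuclideanSpace ℝ (Fin d))
    (hW : ∀ a y, ‖W (β a y)‖ ≤ K * ρ a * γ ^ j)
    (hWLip : ∀ a y y', ‖W (β a y) - W (β a y')‖ ≤ K * ρ a * (D y y') ^ 2)
    (PW : Ybar → EuclideanSpace ℝ (Fin d))
    (hPW : ∀ y, PW y = ∑' a, g a (β a y) • W (β a y)) :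
    (∀ y y', ‖PW y - PW y'‖
        ≤ 3 * C₁ * K * (∑' a, m a * ρ a) * γ ^ ((j : ℝ) / 2) * D y y') ∧
    (∀ y y₁ y₂, D y₁ y₂ ≠ 0 →
      ‖PW y‖ + ‖PW y₁ - PW y₂‖ / D y₁ y₂
        ≤ 4 * C₁ * K * (∑' a, m a * ρ a) * γ ^ ((j : ℝ) / 2)) := by

  obtain ⟨hγ0, hγ1⟩ := hγ
  set q : ℝ := γ ^ ((j : ℝ) / 2) with hq
  have hq0 : 0 < q := Real.rpow_pos_of_pos hγ0 _
  have hq1 : q ≤ 1 := Real.rpow_le_one hγ0.le hγ1.le (by positivity)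
  have hqsq : q * q = γ ^ j := by
    rw [hq, ← Real.rpow_add hγ0, show (j:ℝ)/2 + (j:ℝ)/2 = (j:ℝ) by ring,
      Real.rpow_natCast]
  have hγjq : γ ^ j ≤ q := by nlinarith
  have hR0 : 0 ≤ ∑' a, m a * ρ a :=
    tsum_nonneg fun a => mul_nonneg (hm a) (hρ a)
  -- pointwise norm bound for each term
  have hfb : ∀ y a, ‖g a (β a y) • W (β a y)‖ ≤ C₁ * K * γ ^ j * (m a * ρ a) := by
    intro y a
    rw [norm_smul, Real.norm_eq_abs, abs_of_nonneg (hg _ _)]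
    have h := mul_le_mul (hgb a y) (hW a y) (norm_nonneg _)
      (mul_nonneg (by linarith) (hm a))
    exact h.trans_eq (by ring)
  have hSf : ∀ y, Summable fun a => g a (β a y) • W (β a y) := fun y =>
    Summable.of_norm_bounded (hR.mul_left (C₁ * K * γ ^ j)) (hfb y)
  -- min lemma
  have hmin : ∀ y y', min (γ ^ j) ((D y y') ^ 2) ≤ q * D y y' := by
    intro y y'
    obtain ⟨hD0, hD1⟩ := hD01 y y'
    rcases le_total q (D y y') with h | h
    · calc min (γ ^ j) ((D y y') ^ 2) ≤ γ ^ j := min_le_left _ _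
        _ = q * q := hqsq.symm
        _ ≤ q * D y y' := by nlinarith
    · calc min (γ ^ j) ((D y y') ^ 2) ≤ (D y y') ^ 2 := min_le_right _ _
        _ ≤ q * D y y' := by nlinarith
  -- per-term Lipschitz bound
  have hdiff : ∀ y y' a,
      ‖g a (β a y) • W (β a y) - g a (β a y') • W (β a y')‖
        ≤ 3 * C₁ * K * q * D y y' * (m a * ρ a) := by
    intro y y' a
    obtain ⟨hD0, hD1⟩ := hD01 y y'
    have key : g a (β a y) • W (β a y) - g a (β a y') • W (β a y')
        = (g a (β a y) - g a (β a y')) • W (β a y)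
          + g a (β a y') • (W (β a y) - W (β a y')) := by
      rw [sub_smul, smul_sub]; abel
    have h1 : ‖(g a (β a y) - g a (β a y')) • W (β a y)‖
        ≤ (C₁ * m a * D y y') * (K * ρ a * γ ^ j) := by
      rw [norm_smul, Real.norm_eq_abs]
      exact mul_le_mul (hgLip a y y') (hW a y) (norm_nonneg _)
        (mul_nonneg (mul_nonneg (by linarith) (hm a)) hD0)
    have hWd : ‖W (β a y) - W (β a y')‖ ≤ K * ρ a * min (2 * γ ^ j) ((D y y') ^ 2) := by
      rcases min_cases (2 * γ ^ j) ((D y y') ^ 2) with ⟨he, _⟩ | ⟨he, _⟩ <;> rw [he]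
      · calc ‖W (β a y) - W (β a y')‖ ≤ ‖W (β a y)‖ + ‖W (β a y')‖ := norm_sub_le _ _
          _ ≤ K * ρ a * γ ^ j + K * ρ a * γ ^ j := add_le_add (hW a y) (hW a y')
          _ = K * ρ a * (2 * γ ^ j) := by ring
      · exact hWLip a y y'
    have h2 : ‖g a (β a y') • (W (β a y) - W (β a y'))‖
        ≤ (C₁ * m a) * (K * ρ a * min (2 * γ ^ j) ((D y y') ^ 2)) := by
      rw [norm_smul, Real.norm_eq_abs, abs_of_nonneg (hg _ _)]
      exact mul_le_mul (hgb a y') hWd (norm_nonneg _)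
        (mul_nonneg (by linarith) (hm a))
    have h2m : min (2 * γ ^ j) ((D y y') ^ 2) ≤ 2 * (q * D y y') := by
      rcases le_total (γ ^ j) ((D y y') ^ 2) with h | h
      · have := hmin y y'
        calc min (2 * γ ^ j) ((D y y') ^ 2) ≤ 2 * γ ^ j := min_le_left _ _
          _ ≤ 2 * min (γ ^ j) ((D y y') ^ 2) := by rw [min_eq_left h]
          _ ≤ 2 * (q * D y y') := by linarith
      · have := hmin y y'
        rw [min_eq_right h] at this
        calc min (2 * γ ^ j) ((D y y') ^ 2) ≤ (D y y') ^ 2 := min_le_right _ _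
          _ ≤ 2 * (q * D y y') := by nlinarith [sq_nonneg (D y y')]
    calc ‖g a (β a y) • W (β a y) - g a (β a y') • W (β a y')‖
        ≤ ‖(g a (β a y) - g a (β a y')) • W (β a y)‖
          + ‖g a (β a y') • (W (β a y) - W (β a y'))‖ := by
          rw [key]; exact norm_add_le _ _
      _ ≤ (C₁ * m a * D y y') * (K * ρ a * γ ^ j)
          + (C₁ * m a) * (K * ρ a * min (2 * γ ^ j) ((D y y') ^ 2)) :=
          add_le_add h1 h2
      _ ≤ (C₁ * m a * D y y') * (K * ρ a * q)
          + (C₁ * m a) * (K * ρ a * (2 * (q * D y y'))) := by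
          have e1 : (C₁ * m a * D y y') * (K * ρ a * γ ^ j)
              ≤ (C₁ * m a * D y y') * (K * ρ a * q) :=
            mul_le_mul_of_nonneg_left
              (mul_le_mul_of_nonneg_left hγjq (mul_nonneg hK (hρ a)))
              (mul_nonneg (mul_nonneg (by linarith) (hm a)) hD0)
          have e2 : (C₁ * m a) * (K * ρ a * min (2 * γ ^ j) ((D y y') ^ 2))
              ≤ (C₁ * m a) * (K * ρ a * (2 * (q * D y y'))) :=
            mul_le_mul_of_nonneg_left
              (mul_le_mul_of_nonneg_left h2m (mul_nonneg hK (hρ a)))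
              (mul_nonneg (by linarith) (hm a))
          linarith
      _ = 3 * C₁ * K * q * D y y' * (m a * ρ a) := by ring
  -- Lipschitz part
  have part1 : ∀ y y', ‖PW y - PW y'‖
      ≤ 3 * C₁ * K * (∑' a, m a * ρ a) * q * D y y' := by
    intro y y'
    have hSn : Summable fun a =>
        ‖g a (β a y) • W (β a y) - g a (β a y') • W (β a y')‖ :=
      Summable.of_nonneg_of_le (fun a => norm_nonneg _) (hdiff y y')
        (hR.mul_left _)
    calc ‖PW y - PW y'‖
        = ‖∑' a, (g a (β a y) • W (β a y) - g a (β a y') • W (β a y'))‖ := by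
          rw [hPW y, hPW y', ← Summable.tsum_sub (hSf y) (hSf y')]
      _ ≤ ∑' a, ‖g a (β a y) • W (β a y) - g a (β a y') • W (β a y')‖ :=
          norm_tsum_le_tsum_norm hSn
      _ ≤ ∑' a, 3 * C₁ * K * q * D y y' * (m a * ρ a) :=
          Summable.tsum_le_tsum (hdiff y y') hSn (hR.mul_left _)
      _ = 3 * C₁ * K * (∑' a, m a * ρ a) * q * D y y' := by
          rw [tsum_mul_left]; ring
  refine ⟨part1, ?_⟩
  intro y y₁ y₂ hD
  obtain ⟨hD0, hD1⟩ := hD01 y₁ y₂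
  have hDpos : 0 < D y₁ y₂ := lt_of_le_of_ne hD0 (Ne.symm hD)
  have hSn0 : Summable fun a => ‖g a (β a y) • W (β a y)‖ :=
    Summable.of_nonneg_of_le (fun a => norm_nonneg _) (hfb y) (hR.mul_left _)
  have hsup : ‖PW y‖ ≤ C₁ * K * (∑' a, m a * ρ a) * q := by
    calc ‖PW y‖ = ‖∑' a, g a (β a y) • W (β a y)‖ := by rw [hPW y]
      _ ≤ ∑' a, ‖g a (β a y) • W (β a y)‖ :=
          norm_tsum_le_tsum_norm hSn0
      _ ≤ ∑' a, C₁ * K * γ ^ j * (m a * ρ a) :=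
          Summable.tsum_le_tsum (hfb y) hSn0 (hR.mul_left _)
      _ = C₁ * K * γ ^ j * ∑' a, m a * ρ a := tsum_mul_left
      _ ≤ C₁ * K * q * ∑' a, m a * ρ a := by
          have : C₁ * K * γ ^ j ≤ C₁ * K * q := by
            apply mul_le_mul_of_nonneg_left hγjq (by positivity)
          exact mul_le_mul_of_nonneg_right this hR0
      _ = C₁ * K * (∑' a, m a * ρ a) * q := by ring
  have hlip : ‖PW y₁ - PW y₂‖ / D y₁ y₂ ≤ 3 * C₁ * K * (∑' a, m a * ρ a) * q := by
    rw [div_le_iff₀ hDpos]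
    exact part1 y₁ y₂
  calc ‖PW y‖ + ‖PW y₁ - PW y₂‖ / D y₁ y₂
      ≤ C₁ * K * (∑' a, m a * ρ a) * q + 3 * C₁ * K * (∑' a, m a * ρ a) * q :=
        add_le_add hsup hlip
    _ = 4 * C₁ * K * (∑' a, m a * ρ a) * q := by ring
end

section
/- Let (Ȳ, d, μ̄) be a probability space equipped with a measurable metric d ≤ 1, let p ≥ 1, and let F_θ be the space of bounded d-Lipschitz functions φ : Ȳ → ℝ^d with norm ‖φ‖_θ = |φ|_∞ + sup_{y≠y'}|φ(y)−φ(y')|/d(y,y'). Let L be a linear operator defined on L^1(μ̄;ℝ^d) (acting componentwise) such that: ∫ Lφ dμ̄ = ∫ φ dμ̄ for all φ ∈ L^1; L(c) = c for constants c; ‖Lφ‖_{L^p} ≤ ‖φ‖_{L^p} for all φ ∈ L^p; and there exist C₀ > 0, τ₀ ∈ (0,1) with ‖L^n φ − ∫φ dμ̄‖_θ ≤ C₀ τ₀^n ‖φ‖_θ for all φ ∈ F_θ and n ≥ 1. Let γ ∈ (0,1), K > 0, and let Ā_j ∈ L^p(μ̄;ℝ^d) (j ≥ 0) satisfy ‖Ā_j‖_{L^p}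 ≤ K γ^j and L^{j+1}Ā_j ∈ F_θ with ‖L^{j+1}Ā_j‖_θ ≤ K γ^{j/2}. Set V̄ = Σ_{j=0}^∞ Ā_j (convergent in L^p) and assume ∫ V̄ dμ̄ = 0. Then there exist C > 0 and τ ∈ (0,1) such that ‖L^k V̄‖_{L^p} ≤ C τ^k for all k ≥ 1. -/
open Function MeasureTheory Filter Topology ENNReal

/-- `HolderBound dY φ b` says that `φ` lies in the Lipschitz space `F_θ`
associated to the (separation) metric `dY`, with norm
`‖φ‖_θ = |φ|_∞ + Lip_{dY}(φ)` at most `b`. -/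
def HolderBound {Ybar : Type*} {E : Type*} [SeminormedAddCommGroup E]
    (dY : Ybar → Ybar → ℝ) (φ : Ybar → E) (b : ℝ) : Prop :=
  ∃ b₁ b₂ : ℝ, 0 ≤ b₁ ∧ 0 ≤ b₂ ∧ b₁ + b₂ ≤ b ∧
    (∀ y, ‖φ y‖ ≤ b₁) ∧ (∀ y y', ‖φ y - φ y'‖ ≤ b₂ * dY y y')

lemma my_geom_sum_le {s : ℝ} (h0 : 0 ≤ s) (h1 : s < 1) (n : ℕ) :
    ∑ i ∈ Finset.range n, s ^ i ≤ 1 / (1 - s) := by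
  rw [geom_sum_eq h1.ne n]
  have heq : (s ^ n - 1) / (s - 1) = (1 - s ^ n) / (1 - s) := by
    rw [← neg_div_neg_eq]; ring_nf
  rw [heq, div_le_div_iff₀ (by linarith) (by linarith)]
  nlinarith [pow_nonneg h0 n]

lemma my_mul_pow_le {s : ℝ} (h0 : 0 ≤ s) (h1 : s < 1) (k : ℕ) :
    (k : ℝ) * s ^ (k - 1) ≤ 1 / (1 - s) := by
  have : (k : ℝ) * s ^ (k - 1) = ∑ _i ∈ Finset.range k, s ^ (k - 1) := by
    simp [Finset.sum_const, mul_comm]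
  rw [this]
  refine le_trans (Finset.sum_le_sum fun i hi => ?_) (my_geom_sum_le h0 h1 k)
  exact pow_le_pow_of_le_one h0 h1.le (by have := Finset.mem_range.mp hi; omega)

/-- Lemma 3.3 (lem-key) of the paper in abstract form: exponential decay
of `‖L^k V̄‖_{L^p}` from the spectral gap of `L` on the Lipschitz space and the bounds on
the pieces `Ā_j`. -/
theorem Lp_decay_of_transfer_iterates
    {d : ℕ} {Ybar : Type*} [MeasurableSpace Ybar] (μ : Measure Ybar)
    [IsProbabilityMeasure μ]
    (dY : Ybar → Ybar → ℝ)
    (hdY01 : ∀ y y', dY y y' ∈ Set.Icc (0:ℝ) 1)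
    (hdYself : ∀ y, dY y y = 0)
    (hdYsymm : ∀ y y', dY y y' = dY y' y)
    (hdYtri : ∀ y y' y'', dY y y'' ≤ dY y y' + dY y' y'')
    (hdYmeas : Measurable fun q : Ybar × Ybar => dY q.1 q.2)
    (p : ℝ≥0∞) (hp : 1 ≤ p)
    (L : (Ybar → EuclideanSpace ℝ (Fin d)) → (Ybar → EuclideanSpace ℝ (Fin d)))
    (hLadd : ∀ φ ψ, L (φ + ψ) = L φ + L ψ)
    (hLsmul : ∀ (c : ℝ) φ, L (c • φ) = c • L φ)
    (hLint : ∀ φ, MemLp φ 1 μ → ∫ y, L φ y ∂μ = ∫ y, φ y ∂μ)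
    (hLconst : ∀ c : EuclideanSpace ℝ (Fin d), L (fun _ => c) = fun _ => c)
    (hLp : ∀ φ, MemLp φ p μ → MemLp (L φ) p μ ∧ eLpNorm (L φ) p μ ≤ eLpNorm φ p μ)
    (C₀ τ₀ : ℝ) (hC₀ : 0 < C₀) (hτ₀ : τ₀ ∈ Set.Ioo (0:ℝ) 1)
    (hgap : ∀ (φ : Ybar → EuclideanSpace ℝ (Fin d)) (b : ℝ), HolderBound dY φ b →
      ∀ n, 1 ≤ n →
        HolderBound dY (L^[n] φ - fun _ => ∫ y, φ y ∂μ) (C₀ * τ₀ ^ n * b))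
    (γ : ℝ) (hγ : γ ∈ Set.Ioo (0:ℝ) 1) (K : ℝ) (hK : 0 < K)
    (Abar : ℕ → Ybar → EuclideanSpace ℝ (Fin d))
    (hALp : ∀ j, MemLp (Abar j) p μ)
    (hAnorm : ∀ j, eLpNorm (Abar j) p μ ≤ ENNReal.ofReal (K * γ ^ j))
    (hAhol : ∀ j : ℕ, HolderBound dY (L^[j + 1] (Abar j)) (K * γ ^ ((j : ℝ) / 2)))
    (Vbar : Ybar → EuclideanSpace ℝ (Fin d))
    (hVLp : MemLp Vbar p μ)
    (hVsum : Tendsto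
      (fun n => eLpNorm (fun y => Vbar y - ∑ j ∈ Finset.range n, Abar j y) p μ)
      atTop (𝓝 0))
    (hVmean : ∫ y, Vbar y ∂μ = 0) :
    ∃ C > (0:ℝ), ∃ τ ∈ Set.Ioo (0:ℝ) 1, ∀ k, 1 ≤ k →
      eLpNorm (L^[k] Vbar) p μ ≤ ENNReal.ofReal (C * τ ^ k) := by
  obtain ⟨hτ₀0, hτ₀1⟩ := hτ₀
  obtain ⟨hγ0, hγ1⟩ := hγ
  have hc1 : (0:ℝ) < 1 - γ := by linarith
  -- basic facts about iterates of `L`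
  have hL0 : L (0 : Ybar → EuclideanSpace ℝ (Fin d)) = 0 := by
    have h := hLsmul 0 0
    simpa using h
  have hIterAdd : ∀ n (φ ψ : Ybar → EuclideanSpace ℝ (Fin d)),
      L^[n] (φ + ψ) = L^[n] φ + L^[n] ψ := by
    intro n
    induction n with
    | zero => intro φ ψ; simp
    | succ n ih =>
      intro φ ψ
      rw [Function.iterate_succ_apply, Function.iterate_succ_apply,
        Function.iterate_succ_apply, hLadd, ih]
  have hIterZero : ∀ n, L^[n] (0 : Ybar → EuclideanSpace ℝ (Fin d)) = 0 := by
    intro n; induction n with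
    | zero => simp
    | succ n ih => rw [Function.iterate_succ_apply, hL0, ih]
  have hIterSum : ∀ n (s : Finset ℕ) (f : ℕ → Ybar → EuclideanSpace ℝ (Fin d)),
      L^[n] (∑ j ∈ s, f j) = ∑ j ∈ s, L^[n] (f j) := by
    intro n s f
    induction s using Finset.induction_on with
    | empty => simpa using hIterZero n
    | insert _ _ hj ih => rw [Finset.sum_insert hj, Finset.sum_insert hj, hIterAdd, ih]
  have hIterLp : ∀ n (φ : Ybar → EuclideanSpace ℝ (Fin d)), MemLp φ p μ →
      MemLp (L^[n] φ) p μ ∧ eLpNorm (L^[n] φ) p μ ≤ eLpNorm φ p μ := by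
    intro n
    induction n with
    | zero => intro φ h; rw [Function.iterate_zero_apply]; exact ⟨h, le_rfl⟩
    | succ n ih =>
      intro φ h
      rw [Function.iterate_succ_apply]
      obtain ⟨h1, h2⟩ := hLp φ h
      obtain ⟨h3, h4⟩ := ih (L φ) h1
      exact ⟨h3, h4.trans h2⟩
  have hIterInt : ∀ n (φ : Ybar → EuclideanSpace ℝ (Fin d)), MemLp φ p μ →
      ∫ y, L^[n] φ y ∂μ = ∫ y, φ y ∂μ := by
    intro n
    induction n with
    | zero => intro φ h; simp
    | succ n ih =>
      intro φ h
      rw [Function.iterate_succ_apply, ih (L φ) (hLp φ h).1]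
      exact hLint φ (h.mono_exponent hp)
  -- partial sums and remainders
  have hSLp : ∀ n, MemLp (fun y => ∑ j ∈ Finset.range n, Abar j y) p μ :=
    fun n => memLp_finset_sum (Finset.range n) (fun j _ => hALp j)
  have hRLp : ∀ n, MemLp (fun y => Vbar y - ∑ j ∈ Finset.range n, Abar j y) p μ :=
    fun n => hVLp.sub (hSLp n)
  -- remainder bound
  have hRbound : ∀ J, eLpNorm (fun y => Vbar y - ∑ j ∈ Finset.range J, Abar j y) p μ
      ≤ ENNReal.ofReal (K * γ ^ J / (1 - γ)) := by
    intro J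
    have hstep : ∀ n, J ≤ n →
        eLpNorm (fun y => Vbar y - ∑ j ∈ Finset.range J, Abar j y) p μ ≤
          eLpNorm (fun y => Vbar y - ∑ j ∈ Finset.range n, Abar j y) p μ
            + ENNReal.ofReal (K * γ ^ J / (1 - γ)) := by
      intro n hn
      have hdecomp : (fun y => Vbar y - ∑ j ∈ Finset.range J, Abar j y)
          = (fun y => Vbar y - ∑ j ∈ Finset.range n, Abar j y)
            + ∑ j ∈ Finset.Ico J n, Abar j := by
        funext y
        simp only [Pi.add_apply, Finset.sum_apply]
        rw [Finset.sum_Ico_eq_sub _ hn]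
        abel
      rw [hdecomp]
      refine le_trans (eLpNorm_add_le (hRLp n).aestronglyMeasurable
        (memLp_finset_sum' _ (fun j _ => hALp j)).aestronglyMeasurable hp) ?_
      refine add_le_add (le_refl _) ?_
      refine le_trans (eLpNorm_sum_le (fun j _ => (hALp j).aestronglyMeasurable) hp) ?_
      refine le_trans (Finset.sum_le_sum fun j _ => hAnorm j) ?_
      rw [← ENNReal.ofReal_sum_of_nonneg (fun j _ => by positivity)]
      apply ENNReal.ofReal_le_ofReal
      rw [Finset.sum_Ico_eq_sum_range]
      have heq : ∀ i, K * γ ^ (J + i) = K * γ ^ J * γ ^ i := by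
        intro i; rw [pow_add]; ring
      simp_rw [heq]
      rw [← Finset.mul_sum]
      calc K * γ ^ J * ∑ i ∈ Finset.range (n - J), γ ^ i
          ≤ K * γ ^ J * (1 / (1 - γ)) := by
            refine mul_le_mul_of_nonneg_left (my_geom_sum_le hγ0.le hγ1 _) (by positivity)
        _ = K * γ ^ J / (1 - γ) := by ring
    have hlim : Tendsto (fun n => eLpNorm (fun y => Vbar y - ∑ j ∈ Finset.range n, Abar j y) p μ
        + ENNReal.ofReal (K * γ ^ J / (1 - γ))) atTop
        (𝓝 (ENNReal.ofReal (K * γ ^ J / (1 - γ)))) := by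
      have := hVsum.add (tendsto_const_nhds (x := ENNReal.ofReal (K * γ ^ J / (1 - γ))))
      simpa using this
    exact ge_of_tendsto hlim (by
      filter_upwards [eventually_ge_atTop J] with n hn using hstep n hn)
  -- mean bound
  have hMean : ∀ J, ‖∑ j ∈ Finset.range J, ∫ y, Abar j y ∂μ‖ ≤ K * γ ^ J / (1 - γ) := by
    intro J
    have hRint : Integrable (fun y => Vbar y - ∑ j ∈ Finset.range J, Abar j y) μ :=
      (hRLp J).integrable hp
    have hintR : ∫ y, (Vbar y - ∑ j ∈ Finset.range J, Abar j y) ∂μ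
        = -∑ j ∈ Finset.range J, ∫ y, Abar j y ∂μ := by
      rw [integral_sub (hVLp.integrable hp) ((hSLp J).integrable hp),
        integral_finset_sum _ (fun j _ => (hALp j).integrable hp), hVmean, zero_sub]
    have h1 : ENNReal.ofReal ‖∑ j ∈ Finset.range J, ∫ y, Abar j y ∂μ‖
        ≤ eLpNorm (fun y => Vbar y - ∑ j ∈ Finset.range J, Abar j y) p μ := by
      rw [← norm_neg, ← hintR]
      calc ENNReal.ofReal ‖∫ y, (Vbar y - ∑ j ∈ Finset.range J, Abar j y) ∂μ‖
          ≤ ENNReal.ofReal (∫ y, ‖Vbar y - ∑ j ∈ Finset.range J, Abar j y‖ ∂μ) :=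
            ENNReal.ofReal_le_ofReal (norm_integral_le_integral_norm _)
        _ = ∫⁻ y, ‖Vbar y - ∑ j ∈ Finset.range J, Abar j y‖ₑ ∂μ :=
            ofReal_integral_norm_eq_lintegral_enorm hRint
        _ = eLpNorm (fun y => Vbar y - ∑ j ∈ Finset.range J, Abar j y) 1 μ :=
            eLpNorm_one_eq_lintegral_enorm.symm
        _ ≤ eLpNorm (fun y => Vbar y - ∑ j ∈ Finset.range J, Abar j y) p μ :=
            eLpNorm_le_eLpNorm_of_exponent_le hp (hRLp J).aestronglyMeasurable
    have h2 := h1.trans (hRbound J)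
    rwa [ENNReal.ofReal_le_ofReal_iff (div_nonneg (by positivity) hc1.le)] at h2
  -- constants
  have hsγ0 : 0 < Real.sqrt γ := Real.sqrt_pos.mpr hγ0
  have hsγsq : Real.sqrt γ ^ 2 = γ := Real.sq_sqrt hγ0.le
  have hsγ1 : Real.sqrt γ < 1 := by nlinarith
  set β := max τ₀ (Real.sqrt γ) with hβdef
  have hβ0 : 0 < β := lt_max_of_lt_left hτ₀0
  have hβ1 : β < 1 := max_lt hτ₀1 hsγ1
  have hσ0 : 0 < Real.sqrt β := Real.sqrt_pos.mpr hβ0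
  have hσsq : Real.sqrt β ^ 2 = β := Real.sq_sqrt hβ0.le
  have hσ1 : Real.sqrt β < 1 := by nlinarith
  have hβσ : β ≤ Real.sqrt β := by nlinarith
  set σ := Real.sqrt β with hσdef
  refine ⟨(C₀ * K / (1 - σ) + 2 * (K / (1 - γ))) / σ, ?_, σ, ⟨hσ0, hσ1⟩, ?_⟩
  · have h1 : 0 < C₀ * K / (1 - σ) := div_pos (mul_pos hC₀ hK) (by linarith)
    have h2 : 0 < K / (1 - γ) := div_pos hK hc1
    positivity
  intro k hk
  set J := k / 2 with hJdef
  -- per-term bound from the spectral gap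
  have hterm : ∀ j ∈ Finset.range J,
      eLpNorm (L^[k] (Abar j) - fun _ => ∫ y, Abar j y ∂μ) p μ ≤
        ENNReal.ofReal (C₀ * τ₀ ^ (k - j - 1) * (K * γ ^ ((j:ℝ)/2))) := by
    intro j hj
    have hjmem := Finset.mem_range.mp hj
    have hjk : j + 2 ≤ k := by omega
    have hn1 : 1 ≤ k - (j+1) := by omega
    have hgapj := hgap _ _ (hAhol j) (k - (j+1)) hn1
    have hiter : L^[k - (j+1)] (L^[j+1] (Abar j)) = L^[k] (Abar j) := by
      rw [← Function.iterate_add_apply]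
      congr 1
      omega
    have hint : ∫ y, L^[j+1] (Abar j) y ∂μ = ∫ y, Abar j y ∂μ :=
      hIterInt (j+1) (Abar j) (hALp j)
    rw [hiter, hint] at hgapj
    obtain ⟨b₁, b₂, hb₁, hb₂, hb, hbd, -⟩ := hgapj
    have hbound : ∀ y' : Ybar,
        ‖(L^[k] (Abar j) - fun _ => ∫ y, Abar j y ∂μ : Ybar → EuclideanSpace ℝ (Fin d)) y'‖
        ≤ C₀ * τ₀ ^ (k - (j+1)) * (K * γ ^ ((j:ℝ)/2)) := by
      intro y'
      exact (hbd y').trans (by linarith)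
    have hkey := eLpNorm_le_of_ae_bound (p := p) (μ := μ) (ae_of_all μ hbound)
    have hkj : k - (j+1) = k - j - 1 := by omega
    simpa [measure_univ, ENNReal.one_rpow, hkj] using hkey
  -- decomposition of `L^[k] Vbar`
  have hdecomp : L^[k] Vbar =
      (∑ j ∈ Finset.range J, (L^[k] (Abar j) - fun _ => ∫ y, Abar j y ∂μ))
      + ((fun _ => ∑ j ∈ Finset.range J, ∫ y, Abar j y ∂μ)
        + L^[k] (fun y => Vbar y - ∑ j ∈ Finset.range J, Abar j y)) := by
    have h1 : Vbar = (fun y => ∑ j ∈ Finset.range J, Abar j y)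
        + fun y => Vbar y - ∑ j ∈ Finset.range J, Abar j y := by
      funext y; simp
    have h2 : (fun y => ∑ j ∈ Finset.range J, Abar j y)
        = ∑ j ∈ Finset.range J, Abar j := by
      funext y; simp
    conv_lhs => rw [h1]
    rw [hIterAdd, h2, hIterSum]
    funext y
    simp only [Pi.add_apply, Pi.sub_apply, Finset.sum_apply, Finset.sum_sub_distrib]
    abel
  -- assemble the three pieces
  have hmem1 : MemLp (∑ j ∈ Finset.range J,
      (L^[k] (Abar j) - fun _ => ∫ y, Abar j y ∂μ)) p μ :=
    memLp_finset_sum' _ (fun j _ => ((hIterLp k (Abar j) (hALp j)).1).sub (memLp_const _))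
  have hmem2 : MemLp (fun _ : Ybar => ∑ j ∈ Finset.range J, ∫ y, Abar j y ∂μ) p μ :=
    memLp_const _
  have hmem3 : MemLp (L^[k] (fun y => Vbar y - ∑ j ∈ Finset.range J, Abar j y)) p μ :=
    (hIterLp k _ (hRLp J)).1
  have hsplit : eLpNorm (L^[k] Vbar) p μ ≤
      eLpNorm (∑ j ∈ Finset.range J, (L^[k] (Abar j) - fun _ => ∫ y, Abar j y ∂μ)) p μ
      + (eLpNorm (fun _ : Ybar => ∑ j ∈ Finset.range J, ∫ y, Abar j y ∂μ) p μ
        + eLpNorm (L^[k] (fun y => Vbar y - ∑ j ∈ Finset.range J, Abar j y)) p μ) := by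
    rw [hdecomp]
    refine le_trans (eLpNorm_add_le hmem1.aestronglyMeasurable
      (hmem2.add hmem3).aestronglyMeasurable hp) ?_
    exact add_le_add (le_refl _) (eLpNorm_add_le hmem2.aestronglyMeasurable
      hmem3.aestronglyMeasurable hp)
  have hbnd1 : eLpNorm (∑ j ∈ Finset.range J,
      (L^[k] (Abar j) - fun _ => ∫ y, Abar j y ∂μ)) p μ
      ≤ ENNReal.ofReal (∑ j ∈ Finset.range J,
          C₀ * τ₀ ^ (k - j - 1) * (K * γ ^ ((j:ℝ)/2))) := by
    refine le_trans (eLpNorm_sum_le (fun j _ =>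
      (((hIterLp k (Abar j) (hALp j)).1).sub (memLp_const _)).aestronglyMeasurable) hp) ?_
    rw [ENNReal.ofReal_sum_of_nonneg (fun j _ => by positivity)]
    exact Finset.sum_le_sum hterm
  have hbnd2 : eLpNorm (fun _ : Ybar => ∑ j ∈ Finset.range J, ∫ y, Abar j y ∂μ) p μ
      ≤ ENNReal.ofReal (K * γ ^ J / (1 - γ)) := by
    have h := eLpNorm_le_of_ae_bound (p := p) (μ := μ)
      (ae_of_all μ (fun _ : Ybar => hMean J))
    simpa [measure_univ, ENNReal.one_rpow] using h
  have hbnd3 : eLpNorm (L^[k] (fun y => Vbar y - ∑ j ∈ Finset.range J, Abar j y)) p μ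
      ≤ ENNReal.ofReal (K * γ ^ J / (1 - γ)) :=
    le_trans (hIterLp k _ (hRLp J)).2 (hRbound J)
  have htotal : eLpNorm (L^[k] Vbar) p μ ≤
      ENNReal.ofReal ((∑ j ∈ Finset.range J, C₀ * τ₀ ^ (k - j - 1) * (K * γ ^ ((j:ℝ)/2)))
        + (K * γ ^ J / (1 - γ) + K * γ ^ J / (1 - γ))) := by
    refine le_trans hsplit ?_
    rw [ENNReal.ofReal_add (Finset.sum_nonneg (fun j _ => by positivity))
        (by positivity), ENNReal.ofReal_add (by positivity) (by positivity)]
    exact add_le_add hbnd1 (add_le_add hbnd2 hbnd3)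
  refine le_trans htotal (ENNReal.ofReal_le_ofReal ?_)
  -- final real-number estimate
  have hβτ : τ₀ ≤ β := le_max_left _ _
  have hβsγ : Real.sqrt γ ≤ β := le_max_right _ _
  have hrj : ∀ j : ℕ, γ ^ ((j:ℝ)/2) = Real.sqrt γ ^ j := by
    intro j
    have h : ((j:ℝ)/2) = (1/2:ℝ) * j := by ring
    rw [h, Real.sqrt_eq_rpow, ← Real.rpow_natCast (γ ^ (1/2:ℝ)) j,
      ← Real.rpow_mul hγ0.le]
  have hsum1 : (∑ j ∈ Finset.range J, C₀ * τ₀ ^ (k - j - 1) * (K * γ ^ ((j:ℝ)/2)))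
      ≤ C₀ * K / (1 - σ) * σ ^ (k - 1) := by
    have hterm' : ∀ j ∈ Finset.range J,
        C₀ * τ₀ ^ (k - j - 1) * (K * γ ^ ((j:ℝ)/2)) ≤ C₀ * K * β ^ (k - 1) := by
      intro j hj
      have hjmem := Finset.mem_range.mp hj
      rw [hrj j]
      have h1 : τ₀ ^ (k - j - 1) ≤ β ^ (k - j - 1) := pow_le_pow_left₀ hτ₀0.le hβτ _
      have h2 : Real.sqrt γ ^ j ≤ β ^ j := pow_le_pow_left₀ hsγ0.le hβsγ _
      have h3 : β ^ (k - j - 1) * β ^ j = β ^ (k - 1) := by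
        rw [← pow_add]; congr 1; omega
      calc C₀ * τ₀ ^ (k - j - 1) * (K * Real.sqrt γ ^ j)
          = C₀ * K * (τ₀ ^ (k - j - 1) * Real.sqrt γ ^ j) := by ring
        _ ≤ C₀ * K * (β ^ (k - j - 1) * β ^ j) := by
            refine mul_le_mul_of_nonneg_left ?_ (by positivity)
            exact mul_le_mul h1 h2 (by positivity) (by positivity)
        _ = C₀ * K * β ^ (k - 1) := by rw [h3]
    calc (∑ j ∈ Finset.range J, C₀ * τ₀ ^ (k - j - 1) * (K * γ ^ ((j:ℝ)/2)))
        ≤ ∑ _j ∈ Finset.range J, C₀ * K * β ^ (k - 1) := Finset.sum_le_sum hterm'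
      _ = (J : ℝ) * (C₀ * K * β ^ (k - 1)) := by
          rw [Finset.sum_const, Finset.card_range, nsmul_eq_mul]
      _ ≤ (k : ℝ) * (C₀ * K * β ^ (k - 1)) := by
          refine mul_le_mul_of_nonneg_right (Nat.cast_le.mpr ?_) (by positivity)
          omega
      _ = C₀ * K * ((k : ℝ) * σ ^ (k - 1)) * σ ^ (k - 1) := by
          have : β ^ (k - 1) = σ ^ (k - 1) * σ ^ (k - 1) := by
            rw [← hσsq, ← pow_mul, two_mul, pow_add]
          rw [this]; ring
      _ ≤ C₀ * K * (1 / (1 - σ)) * σ ^ (k - 1) := by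
          refine mul_le_mul_of_nonneg_right (mul_le_mul_of_nonneg_left
            (my_mul_pow_le hσ0.le hσ1 k) (by positivity)) (by positivity)
      _ = C₀ * K / (1 - σ) * σ ^ (k - 1) := by ring
  have hsum2 : K * γ ^ J / (1 - γ) ≤ K / (1 - γ) * σ ^ (k - 1) := by
    have h1 : γ ^ J ≤ σ ^ (k - 1) := by
      have hγJ : γ ^ J = Real.sqrt γ ^ (2 * J) := by
        rw [pow_mul, hsγsq]
      have h2 : Real.sqrt γ ^ (2 * J) ≤ Real.sqrt γ ^ (k - 1) :=
        pow_le_pow_of_le_one hsγ0.le hsγ1.le (by omega)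
      have h3 : Real.sqrt γ ^ (k - 1) ≤ β ^ (k - 1) := pow_le_pow_left₀ hsγ0.le hβsγ _
      have h4 : β ^ (k - 1) ≤ σ ^ (k - 1) := pow_le_pow_left₀ hβ0.le hβσ _
      rw [hγJ]; exact h2.trans (h3.trans h4)
    calc K * γ ^ J / (1 - γ) = K / (1 - γ) * γ ^ J := by ring
      _ ≤ K / (1 - γ) * σ ^ (k - 1) := by
          refine mul_le_mul_of_nonneg_left h1 (le_of_lt (div_pos hK hc1))
  have hfinal : (C₀ * K / (1 - σ) + 2 * (K / (1 - γ))) / σ * σ ^ k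
      = (C₀ * K / (1 - σ) + 2 * (K / (1 - γ))) * σ ^ (k - 1) := by
    have hkk : k = (k - 1) + 1 := by omega
    rw [show σ ^ k = σ ^ (k - 1) * σ by rw [← pow_succ, ← hkk]]
    field_simp
  rw [hfinal]
  linarith [hsum1, hsum2]
end
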